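/- Let b ∈ (0,1), σ₀ ≠ 0, μ₀ ≠ 0, r ∈ ℝ, and define on ℝ² the functions ĝ₁₁(θ,x) = 1/σ₀ + r cos²θ, ĝ₁₂(θ,x) = −(σ₀/μ₀) r cos θ, ĝ₂₂(θ,x) = b/μ₀ + σ₀² r/μ₀². Then ĝ satisfies the three kinetic-energy matching equations of the inverted pendulum cart at every point: (ĝ₂₂ − b cos θ ĝ₁₂) ∂ĝ₁₁/∂θ + (b cos θ ĝ₁₁ − ĝ₁₂)(2 ∂ĝ₁₂/∂θ − ∂ĝ₁₁/∂x) = 0; (ĝ₂₂ − b cos θ ĝ₁₂)(2 ∂ĝ₁₂/∂x − ∂ĝ₂₂/∂θ) + (b cos θ ĝ₁₁ − ĝ₁₂) ∂ĝ₂₂/∂x = 0; and (ĝ₂₂ − b cos θ ĝ₁₂) ∂ĝ₁₁/∂x + (b cos θ ĝ₁₁ − ĝ₁₂) ∂ĝ₂₂/∂θ = 0. -/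
import Mathlib


/-!
Statement 8: the controlled metric `ĝ₁₁ = 1/σ₀ + r cos²θ`,
`ĝ₁₂ = −(σ₀/μ₀) r cos θ`, `ĝ₂₂ = b/μ₀ + σ₀² r/μ₀²` satisfies the three
kinetic-energy matching equations of the inverted pendulum cart.
-/

noncomputable section

open Real Set

/-- Partial derivative in the `θ` (first) direction. -/
def pdth (f : ℝ × ℝ → ℝ) (p : ℝ × ℝ) : ℝ := fderiv ℝ f p (1, 0)

/-- Partial derivative in the `x` (second) direction. -/
def pdx (f : ℝ × ℝ → ℝ) (p : ℝ × ℝ) : ℝ := fderiv ℝ f p (0, 1)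

lemma hasFDeriv_cosfst (p : ℝ × ℝ) :
    HasFDerivAt (fun q : ℝ × ℝ => Real.cos q.1)
      ((-Real.sin p.1) • (ContinuousLinearMap.fst ℝ ℝ ℝ)) p :=
  (Real.hasDerivAt_cos p.1).comp_hasFDerivAt p (hasFDerivAt_fst)

theorem statement8 (b σ₀ μ₀ r : ℝ) (hb : b ∈ Ioo (0 : ℝ) 1)
    (hσ₀ : σ₀ ≠ 0) (hμ₀ : μ₀ ≠ 0)
    (g11 g12 g22 : ℝ × ℝ → ℝ)
    (hg11 : ∀ p : ℝ × ℝ, g11 p = 1 / σ₀ + r * Real.cos p.1 ^ 2)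
    (hg12 : ∀ p : ℝ × ℝ, g12 p = -(σ₀ / μ₀) * r * Real.cos p.1)
    (hg22 : ∀ p : ℝ × ℝ, g22 p = b / μ₀ + σ₀ ^ 2 * r / μ₀ ^ 2) :
    (∀ p : ℝ × ℝ,
      (g22 p - b * Real.cos p.1 * g12 p) * pdth g11 p
        + (b * Real.cos p.1 * g11 p - g12 p) * (2 * pdth g12 p - pdx g11 p) = 0) ∧
    (∀ p : ℝ × ℝ,
      (g22 p - b * Real.cos p.1 * g12 p) * (2 * pdx g12 p - pdth g22 p)
        + (b * Real.cos p.1 * g11 p - g12 p) * pdx g22 p = 0) ∧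
    (∀ p : ℝ × ℝ,
      (g22 p - b * Real.cos p.1 * g12 p) * pdx g11 p
        + (b * Real.cos p.1 * g11 p - g12 p) * pdth g22 p = 0) := by
  have hG11 : g11 = fun q : ℝ × ℝ => 1 / σ₀ + r * (Real.cos q.1 * Real.cos q.1) := by
    funext q; rw [hg11]; ring
  have hG12 : g12 = fun q : ℝ × ℝ => -(σ₀ / μ₀) * r * Real.cos q.1 := funext hg12
  have hG22 : g22 = fun _ : ℝ × ℝ => b / μ₀ + σ₀ ^ 2 * r / μ₀ ^ 2 := funext hg22
  -- derivative facts at an arbitrary point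
  have h11 : ∀ p : ℝ × ℝ, HasFDerivAt g11
      ((r • ((Real.cos p.1) • ((-Real.sin p.1) • (ContinuousLinearMap.fst ℝ ℝ ℝ))
        + (Real.cos p.1) • ((-Real.sin p.1) • (ContinuousLinearMap.fst ℝ ℝ ℝ))))) p := by
    intro p
    rw [hG11]
    exact (((hasFDeriv_cosfst p).mul (hasFDeriv_cosfst p)).const_mul r).const_add (1 / σ₀)
  have h12 : ∀ p : ℝ × ℝ, HasFDerivAt g12
      ((-(σ₀ / μ₀) * r) • ((-Real.sin p.1) • (ContinuousLinearMap.fst ℝ ℝ ℝ))) p := by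
    intro p
    rw [hG12]
    exact (hasFDeriv_cosfst p).const_mul (-(σ₀ / μ₀) * r)
  have h22 : ∀ p : ℝ × ℝ, HasFDerivAt g22 (0 : ℝ × ℝ →L[ℝ] ℝ) p := by
    intro p; rw [hG22]; exact hasFDerivAt_const _ _
  have e11th : ∀ p : ℝ × ℝ, pdth g11 p = -2 * r * Real.cos p.1 * Real.sin p.1 := by
    intro p; rw [pdth, (h11 p).fderiv]; simp; ring
  have e11x : ∀ p : ℝ × ℝ, pdx g11 p = 0 := by
    intro p; rw [pdx, (h11 p).fderiv]; simp
  have e12th : ∀ p : ℝ × ℝ, pdth g12 p = (σ₀ / μ₀) * r * Real.sin p.1 := by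
    intro p; rw [pdth, (h12 p).fderiv]; simp
  have e12x : ∀ p : ℝ × ℝ, pdx g12 p = 0 := by
    intro p; rw [pdx, (h12 p).fderiv]; simp
  have e22th : ∀ p : ℝ × ℝ, pdth g22 p = 0 := by
    intro p; rw [pdth, (h22 p).fderiv]; simp
  have e22x : ∀ p : ℝ × ℝ, pdx g22 p = 0 := by
    intro p; rw [pdx, (h22 p).fderiv]; simp
  refine ⟨fun p => ?_, fun p => ?_, fun p => ?_⟩
  · rw [e11th, e11x, e12th, hg11, hg12, hg22]
    field_simp
    ring
  · rw [e12x, e22th, e22x]; ring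
  · rw [e11x, e22th]; ring
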